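/- Let a < x be reals, 0 < β < 1, and η > -1 with η - β > -1. Then the left Riemann–Liouville fractional derivative of order β of the function t ↦ (t - a)^η evaluated at x equals (Γ(η+1) / Γ(η+1-β)) · (x - a)^(η-β). -/

import Mathlib

/-! Substituting `t = a + (u - a) s` turns the Riemann–Liouville integral of `(t - a)^η` into
`(u - a)^(η + 1 - β)` times the Euler Beta integral
`B(η + 1, 1 - β) = Γ(η + 1) Γ(1 - β) / Γ(η + 2 - β)`.
Differentiating the power in `u` and using `Γ(s + 1) = s Γ(s)` gives the formula. -/

theorem integral_rpow_mul_one_sub_rpow {u v : ℝ} (hu : 0 < u) (hv : 0 < v) :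
    ∫ s in (0 : ℝ)..1, s ^ (u - 1) * (1 - s) ^ (v - 1) =
      Real.Gamma u * Real.Gamma v / Real.Gamma (u + v) := by
  apply Complex.ofReal_injective
  have hB := Complex.betaIntegral_eq_Gamma_mul_div u v (by simpa) (by simpa)
  push_cast [← Complex.Gamma_ofReal]
  rw [← hB, Complex.betaIntegral, ← intervalIntegral.integral_ofReal]
  refine intervalIntegral.integral_congr fun s hs => ?_
  rw [Set.uIcc_of_le zero_le_one] at hs
  simp only [Complex.ofReal_mul, Complex.ofReal_cpow hs.1,
    Complex.ofReal_cpow (sub_nonneg.2 hs.2)]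
  push_cast
  ring_nf

theorem integral_sub_rpow_mul_sub_rpow {a b p q : ℝ} (hab : a < b) (hp : -1 < p) (hq : -1 < q) :
    ∫ t in a..b, (t - a) ^ p * (b - t) ^ q =
      Real.Gamma (p + 1) * Real.Gamma (q + 1) *
        ((b - a) ^ (p + q + 1) / Real.Gamma (p + q + 2)) := by
  have hba : 0 < b - a := sub_pos.2 hab
  have hsub := intervalIntegral.smul_integral_comp_mul_add
    (fun t => (t - a) ^ p * (b - t) ^ q) (a := 0) (b := 1) (b - a) a
  simp only [mul_zero, zero_add, mul_one, sub_add_cancel] at hsub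
  have hscale : ∫ s in (0 : ℝ)..1, ((b - a) * s + a - a) ^ p * (b - ((b - a) * s + a)) ^ q =
      (b - a) ^ p * (b - a) ^ q *
        ∫ s in (0 : ℝ)..1, s ^ (p + 1 - 1) * (1 - s) ^ (q + 1 - 1) := by
    rw [← intervalIntegral.integral_const_mul]
    refine intervalIntegral.integral_congr fun s hs => ?_
    rw [Set.uIcc_of_le zero_le_one] at hs
    rw [show (b - a) * s + a - a = (b - a) * s by ring,
      show b - ((b - a) * s + a) = (b - a) * (1 - s) by ring,
      Real.mul_rpow hba.le hs.1, Real.mul_rpow hba.le (sub_nonneg.2 hs.2)]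
    simp only [add_sub_cancel_right]
    ring
  rw [← hsub, hscale, integral_rpow_mul_one_sub_rpow (by linarith) (by linarith),
    smul_eq_mul, Real.rpow_add hba (p + q), Real.rpow_add hba, Real.rpow_one,
    show p + 1 + (q + 1) = p + q + 2 by ring]
  ring

theorem hasDerivAt_sub_rpow_div_Gamma {a x s : ℝ} (hs : 0 < s) (hax : a < x) :
    HasDerivAt (fun u => (u - a) ^ s / Real.Gamma (s + 1))
      ((x - a) ^ (s - 1) / Real.Gamma s) x := by
  have hpow : HasDerivAt (fun u => (u - a) ^ s) (s * (x - a) ^ (s - 1)) x := by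
    simpa using ((hasDerivAt_id x).sub_const a).rpow_const (Or.inl (sub_pos.2 hax).ne')
  rw [Real.Gamma_add_one hs.ne']
  exact (hpow.div_const _).congr_deriv (mul_div_mul_left _ _ hs.ne')

theorem rl_deriv_of_power_general (a x β η : ℝ) (hax : a < x) (hβ1 : β < 1)
    (hη : -1 < η) (hηβ : -1 < η - β) :
    deriv (fun u : ℝ =>
        (1 / Real.Gamma (1 - β)) * ∫ t in a..u, (t - a) ^ η * (u - t) ^ (-β)) x =
      (Real.Gamma (η + 1) / Real.Gamma (η + 1 - β)) * (x - a) ^ (η - β) := by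
  have hΓ : Real.Gamma (1 - β) ≠ 0 := (Real.Gamma_pos_of_pos (by linarith)).ne'
  have hev : (fun u : ℝ =>
      (1 / Real.Gamma (1 - β)) * ∫ t in a..u, (t - a) ^ η * (u - t) ^ (-β)) =ᶠ[nhds x]
      fun u => Real.Gamma (η + 1) * ((u - a) ^ (η + 1 - β) / Real.Gamma (η + 1 - β + 1)) := by
    filter_upwards [Ioi_mem_nhds hax] with u hu
    rw [integral_sub_rpow_mul_sub_rpow hu hη (by linarith), show -β + 1 = 1 - β by ring,
      show η + -β + 1 = η + 1 - β by ring, show η + -β + 2 = η + 1 - β + 1 by ring]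
    field_simp
  rw [hev.deriv_eq, ((hasDerivAt_sub_rpow_div_Gamma (by linarith) hax).const_mul _).deriv,
    show η + 1 - β - 1 = η - β by ring]
  ring

theorem rl_deriv_of_power (a x β η : ℝ) (hax : a < x) (hβ0 : 0 < β) (hβ1 : β < 1)
    (hη : -1 < η) (hηβ : -1 < η - β) :
    deriv (fun u : ℝ =>
        (1 / Real.Gamma (1 - β)) * ∫ t in a..u, (t - a) ^ η * (u - t) ^ (-β)) x =
      (Real.Gamma (η + 1) / Real.Gamma (η + 1 - β)) * (x - a) ^ (η - β) :=
  rl_deriv_of_power_general a x β η hax hβ1 hη hηβ
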